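/- For all k ≥ 0, the (2k+1)-st power of the augmentation ideal of Z[R_3] is generated as an abelian group by 3^k E_1 and 3^k E_2, and for all ℓ ≥ 1 the (2ℓ)-th power is generated by 3^{ℓ-1}(E_1 + E_2) and 3^ℓ E_2. -/

import Mathlib

/-- Product on the quandle ring ℤ[R_3]: e_x · e_y = e_{2y-x}. -/
def qr (u v : ZMod 3 → ℤ) : ZMod 3 → ℤ :=
  fun z => ∑ x, ∑ y, if 2 * y - x = z then u x * v y else 0

/-- Basis element e_i. -/
def e (i : ZMod 3) : ZMod 3 → ℤ := fun z => if z = i then 1 else 0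

/-- E_i = e_i - e_0. -/
def E (i : ZMod 3) : ZMod 3 → ℤ := e i - e 0

/-- The augmentation ideal Δ(R_3), as an additive subgroup. -/
def Δ : AddSubgroup (ZMod 3 → ℤ) where
  carrier := {u | ∑ x, u x = 0}
  zero_mem' := by simp
  add_mem' := by
    intro u v hu hv
    simp only [Set.mem_setOf_eq, Pi.add_apply, Finset.sum_add_distrib] at *
    omega
  neg_mem' := by
    intro u hu
    simp only [Set.mem_setOf_eq, Pi.neg_apply, Finset.sum_neg_distrib] at *
    omega

/-- Powers of the augmentation ideal: Dpow k = Δ^{k+1}, where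
Δ^{k+1} = ⟨Δ^k · Δ⟩ as an abelian group. -/
def Dpow : ℕ → AddSubgroup (ZMod 3 → ℤ)
  | 0 => Δ
  | k + 1 => AddSubgroup.closure {w | ∃ u ∈ Dpow k, ∃ v ∈ Δ, w = qr u v}

lemma sum3 (f : ZMod 3 → ℤ) : ∑ x, f x = f 0 + f 1 + f 2 := by
  show ∑ x : Fin 3, f x = _
  exact Fin.sum_univ_three f

lemma qr0 (u v : ZMod 3 → ℤ) : qr u v 0 = u 0 * v 0 + u 2 * v 1 + u 1 * v 2 := by
  simp only [qr, sum3]; simp (config := { decide := true }); ring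
lemma qr1 (u v : ZMod 3 → ℤ) : qr u v 1 = u 2 * v 0 + u 1 * v 1 + u 0 * v 2 := by
  simp only [qr, sum3]; simp (config := { decide := true }); ring
lemma qr2 (u v : ZMod 3 → ℤ) : qr u v 2 = u 1 * v 0 + u 0 * v 1 + u 2 * v 2 := by
  simp only [qr, sum3]; simp (config := { decide := true }); ring

lemma mem_Δ (v : ZMod 3 → ℤ) : v ∈ Δ ↔ v 0 + v 1 + v 2 = 0 := by
  change (∑ x, v x = 0) ↔ _
  rw [sum3]

lemma ext3 (f g : ZMod 3 → ℤ) (h0 : f 0 = g 0) (h1 : f 1 = g 1) (h2 : f 2 = g 2) :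
    f = g := by
  funext x
  fin_cases x
  exacts [h0, h1, h2]

def G1 (k : ℕ) : AddSubgroup (ZMod 3 → ℤ) where
  carrier := {u | u 0 + u 1 + u 2 = 0 ∧ (3:ℤ)^k ∣ u 1 ∧ (3:ℤ)^k ∣ u 2}
  zero_mem' := by simp
  add_mem' := by
    rintro u v ⟨h1, h2, h3⟩ ⟨h4, h5, h6⟩
    exact ⟨by simp only [Pi.add_apply]; omega, by simpa using dvd_add h2 h5,
      by simpa using dvd_add h3 h6⟩
  neg_mem' := by
    rintro u ⟨h1, h2, h3⟩
    exact ⟨by simp only [Pi.neg_apply]; omega, by simpa using h2.neg_right,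
      by simpa using h3.neg_right⟩

def G2 (m : ℕ) : AddSubgroup (ZMod 3 → ℤ) where
  carrier := {u | u 0 + u 1 + u 2 = 0 ∧ (3:ℤ)^m ∣ u 1 ∧ (3:ℤ)^(m+1) ∣ u 2 - u 1}
  zero_mem' := by simp
  add_mem' := by
    rintro u v ⟨h1, h2, h3⟩ ⟨h4, h5, h6⟩
    refine ⟨by simp only [Pi.add_apply]; omega, by simpa using dvd_add h2 h5, ?_⟩
    have := dvd_add h3 h6
    simp only [Pi.add_apply]
    convert this using 1; rfl; ring
  neg_mem' := by
    rintro u ⟨h1, h2, h3⟩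
    refine ⟨by simp only [Pi.neg_apply]; omega, by simpa using h2.neg_right, ?_⟩
    have := h3.neg_right
    simp only [Pi.neg_apply]
    convert this using 1; rfl; ring

lemma mem_G1 (k : ℕ) (u : ZMod 3 → ℤ) :
    u ∈ G1 k ↔ u 0 + u 1 + u 2 = 0 ∧ (3:ℤ)^k ∣ u 1 ∧ (3:ℤ)^k ∣ u 2 := Iff.rfl

lemma mem_G2 (m : ℕ) (u : ZMod 3 → ℤ) :
    u ∈ G2 m ↔ u 0 + u 1 + u 2 = 0 ∧ (3:ℤ)^m ∣ u 1 ∧ (3:ℤ)^(m+1) ∣ u 2 - u 1 := Iff.rfl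

lemma e10 : E 1 0 = -1 := by simp only [E, e, Pi.sub_apply]; decide
lemma e11 : E 1 1 = 1 := by simp only [E, e, Pi.sub_apply]; decide
lemma e12 : E 1 2 = 0 := by simp only [E, e, Pi.sub_apply]; decide
lemma e20 : E 2 0 = -1 := by simp only [E, e, Pi.sub_apply]; decide
lemma e21 : E 2 1 = 0 := by simp only [E, e, Pi.sub_apply]; decide
lemma e22 : E 2 2 = 1 := by simp only [E, e, Pi.sub_apply]; decide

lemma closure_G1 (k : ℕ) :
    AddSubgroup.closure {(3 ^ k : ℤ) • E 1, (3 ^ k : ℤ) • E 2} = G1 k := by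
  apply le_antisymm
  · rw [AddSubgroup.closure_le]
    rintro w (rfl | rfl) <;>
      refine ⟨?_, ?_, ?_⟩ <;>
      simp [Pi.smul_apply, e10, e11, e12, e20, e21, e22] <;> omega
  · rintro u ⟨h1, ⟨a, ha⟩, ⟨b, hb⟩⟩
    rw [AddSubgroup.mem_closure_pair]
    have hu0 : u 0 = -(3^k*a) - 3^k*b := by rw [ha, hb] at h1; linarith
    refine ⟨a, b, ext3 _ _ ?_ ?_ ?_⟩ <;>
      simp only [Pi.add_apply, Pi.smul_apply, smul_eq_mul,
        e10, e11, e12, e20, e21, e22, hu0, ha, hb] <;> ring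

lemma closure_G2 (m : ℕ) :
    AddSubgroup.closure {(3 ^ m : ℤ) • (E 1 + E 2), (3 ^ (m+1) : ℤ) • E 2} = G2 m := by
  apply le_antisymm
  · rw [AddSubgroup.closure_le]
    have sl : ∀ x : ZMod 3, ∀ c : ℤ, (c • (E 1 + E 2)) x = c * (E 1 x + E 2 x) := by
      intro x c; simp
    have sl2 : ∀ x : ZMod 3, ∀ c : ℤ, (c • E 2) x = c * E 2 x := by
      intro x c; simp
    rintro w (rfl | rfl)
    · exact ⟨by simp only [sl, e10, e11, e12, e20, e21, e22]; ring,
        ⟨1, by simp only [sl, e11, e21]; ring⟩,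
        ⟨0, by simp only [sl, e11, e12, e21, e22]; ring⟩⟩
    · exact ⟨by simp only [sl2, e20, e21, e22]; ring,
        ⟨0, by simp only [sl2, e21]; ring⟩,
        ⟨1, by simp only [sl2, e21, e22, pow_succ]; ring⟩⟩
  · rintro u ⟨h1, ⟨a, ha⟩, ⟨c, hc⟩⟩
    rw [AddSubgroup.mem_closure_pair]
    have hu2 : u 2 = 3^m*a + 3^(m+1)*c := by rw [ha] at hc; linarith
    have hu0 : u 0 = -(3^m*a) - (3^m*a + 3^(m+1)*c) := by rw [ha, hu2] at h1; linarith
    refine ⟨a, c, ext3 _ _ ?_ ?_ ?_⟩ <;>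
      simp only [Pi.add_apply, Pi.smul_apply, smul_eq_mul,
        e10, e11, e12, e20, e21, e22, hu0, ha, hu2, pow_succ] <;> ring

lemma memG1_gen1 (k : ℕ) : (3 ^ k : ℤ) • E 1 ∈ G1 k := by
  refine ⟨?_, ⟨1, ?_⟩, ⟨0, ?_⟩⟩ <;>
    simp [Pi.smul_apply, e10, e11, e12]

lemma memG2_gen1 (k : ℕ) : (3 ^ k : ℤ) • (E 1 + E 2) ∈ G2 k := by
  refine ⟨?_, ⟨1, ?_⟩, ⟨0, ?_⟩⟩ <;>
    simp [Pi.smul_apply, e10, e11, e12, e20, e21, e22] <;> ring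

lemma memE2 : E 2 ∈ Δ := by rw [mem_Δ, e20, e21, e22]; ring
lemma memE1 : E 1 ∈ Δ := by rw [mem_Δ, e10, e11, e12]; ring

lemma step_even (k : ℕ) (h : Dpow (2*k) = G1 k) : Dpow (2*k+1) = G2 k := by
  show AddSubgroup.closure {w | ∃ u ∈ Dpow (2*k), ∃ v ∈ Δ, w = qr u v} = G2 k
  apply le_antisymm
  · rw [AddSubgroup.closure_le]
    rintro w ⟨u, hu, v, hv, rfl⟩
    rw [h, mem_G1] at hu
    obtain ⟨h1, ⟨a, ha⟩, ⟨b, hb⟩⟩ := hu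
    rw [mem_Δ] at hv
    have hu0 : u 0 = -(3^k*a) - 3^k*b := by rw [ha, hb] at h1; linarith
    have hv0 : v 0 = -v 1 - v 2 := by linarith
    refine ⟨?_, ⟨b * v 0 + a * v 1 - (a+b) * v 2, ?_⟩,
      ⟨b * v 2 - a * v 1, ?_⟩⟩
    · rw [qr0, qr1, qr2]; linear_combination (v 0 + v 1 + v 2) * h1
    · rw [qr1, hu0, ha, hb]; ring
    · rw [qr1, qr2, hu0, ha, hb, hv0, pow_succ]; ring
  · rw [← closure_G2]
    rw [AddSubgroup.closure_le]
    have m1 : qr ((3 ^ k : ℤ) • E 1) (E 2) ∈ Dpow (2*k+1) := by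
      apply AddSubgroup.subset_closure
      exact ⟨_, by rw [h]; exact memG1_gen1 k, _, memE2, rfl⟩
    have m2 : qr ((3 ^ k : ℤ) • E 1) (E 1) ∈ Dpow (2*k+1) := by
      apply AddSubgroup.subset_closure
      exact ⟨_, by rw [h]; exact memG1_gen1 k, _, memE1, rfl⟩
    rintro w (rfl | rfl)
    · have : (3 ^ k : ℤ) • (E 1 + E 2) = -(qr ((3 ^ k : ℤ) • E 1) (E 2)) := by
        refine ext3 _ _ ?_ ?_ ?_ <;>
          simp only [Pi.neg_apply, Pi.add_apply, Pi.smul_apply, smul_eq_mul,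
            qr0, qr1, qr2, e10, e11, e12, e20, e21, e22] <;> ring
      rw [this]; exact neg_mem m1
    · have : (3 ^ (k+1) : ℤ) • E 2
          = -(qr ((3 ^ k : ℤ) • E 1) (E 2)) - qr ((3 ^ k : ℤ) • E 1) (E 1) := by
        refine ext3 _ _ ?_ ?_ ?_ <;>
          simp only [Pi.neg_apply, Pi.sub_apply, Pi.smul_apply, smul_eq_mul,
            qr0, qr1, qr2, e10, e11, e12, e20, e21, e22, pow_succ] <;> ring
      rw [this]; exact sub_mem (neg_mem m1) m2

lemma step_odd (k : ℕ) (h : Dpow (2*k+1) = G2 k) : Dpow (2*k+2) = G1 (k+1) := by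
  show AddSubgroup.closure {w | ∃ u ∈ Dpow (2*k+1), ∃ v ∈ Δ, w = qr u v} = G1 (k+1)
  apply le_antisymm
  · rw [AddSubgroup.closure_le]
    rintro w ⟨u, hu, v, hv, rfl⟩
    rw [h, mem_G2] at hu
    obtain ⟨h1, ⟨a, ha⟩, ⟨c, hc⟩⟩ := hu
    rw [mem_Δ] at hv
    have hu2 : u 2 = 3^k*a + 3^(k+1)*c := by rw [ha] at hc; linarith
    have hu0 : u 0 = -(3^k*a) - (3^k*a + 3^(k+1)*c) := by rw [ha, hu2] at h1; linarith
    have hv0 : v 0 = -v 1 - v 2 := by linarith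
    refine ⟨?_, ⟨-(c * v 1) - (a + 2*c) * v 2, ?_⟩, ⟨-((a+c) * v 1) + c * v 2, ?_⟩⟩
    · rw [qr0, qr1, qr2]; linear_combination (v 0 + v 1 + v 2) * h1
    · rw [qr1, hu0, ha, hu2, hv0, pow_succ]; ring
    · rw [qr2, hu0, ha, hu2, hv0, pow_succ]; ring
  · rw [← closure_G1]
    rw [AddSubgroup.closure_le]
    have m1 : qr ((3 ^ k : ℤ) • (E 1 + E 2)) (E 2) ∈ Dpow (2*k+2) := by
      apply AddSubgroup.subset_closure
      exact ⟨_, by rw [h]; exact memG2_gen1 k, _, memE2, rfl⟩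
    have m2 : qr ((3 ^ k : ℤ) • (E 1 + E 2)) (E 1) ∈ Dpow (2*k+2) := by
      apply AddSubgroup.subset_closure
      exact ⟨_, by rw [h]; exact memG2_gen1 k, _, memE1, rfl⟩
    rintro w (rfl | rfl)
    · have : (3 ^ (k+1) : ℤ) • E 1 = -(qr ((3 ^ k : ℤ) • (E 1 + E 2)) (E 2)) := by
        refine ext3 _ _ ?_ ?_ ?_ <;>
          simp only [Pi.neg_apply, Pi.add_apply, Pi.smul_apply, smul_eq_mul,
            qr0, qr1, qr2, e10, e11, e12, e20, e21, e22, pow_succ] <;> ring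
      rw [this]; exact neg_mem m1
    · have : (3 ^ (k+1) : ℤ) • E 2 = -(qr ((3 ^ k : ℤ) • (E 1 + E 2)) (E 1)) := by
        refine ext3 _ _ ?_ ?_ ?_ <;>
          simp only [Pi.neg_apply, Pi.add_apply, Pi.smul_apply, smul_eq_mul,
            qr0, qr1, qr2, e10, e11, e12, e20, e21, e22, pow_succ] <;> ring
      rw [this]; exact neg_mem m2

lemma main : ∀ k : ℕ, Dpow (2*k) = G1 k ∧ Dpow (2*k+1) = G2 k := by
  intro k
  induction k with
  | zero =>
    have h0 : Dpow 0 = G1 0 := by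
      ext u
      show u ∈ Δ ↔ _
      rw [mem_Δ, mem_G1]
      simp
    exact ⟨h0, step_even 0 h0⟩
  | succ k ih =>
    have h1 : Dpow (2*(k+1)) = G1 (k+1) := by
      rw [show 2*(k+1) = 2*k+2 from by ring]
      exact step_odd k ih.2
    exact ⟨h1, step_even (k+1) h1⟩

/-- Δ(R_3)^{2k+1} = ⟨3^k E_1, 3^k E_2⟩ for k ≥ 0, and
Δ(R_3)^{2ℓ} = ⟨3^{ℓ-1}(E_1 + E_2), 3^ℓ E_2⟩ for ℓ ≥ 1. -/
theorem stmt7 :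
    (∀ k : ℕ, Dpow (2 * k)
        = AddSubgroup.closure {(3 ^ k : ℤ) • E 1, (3 ^ k : ℤ) • E 2}) ∧
    (∀ l : ℕ, 1 ≤ l → Dpow (2 * l - 1)
        = AddSubgroup.closure
            {(3 ^ (l - 1) : ℤ) • (E 1 + E 2), (3 ^ l : ℤ) • E 2}) := by
  constructor
  · intro k
    rw [closure_G1]
    exact (main k).1
  · intro l hl
    obtain ⟨k, rfl⟩ : ∃ k, l = k + 1 := ⟨l - 1, by omega⟩
    rw [show 2*(k+1)-1 = 2*k+1 from by omega, Nat.add_sub_cancel, closure_G2]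
    exact (main k).2
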